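/- For every real $z > 1/2$, the Gamma function satisfies $\frac{\Gamma(z+1/2)}{\Gamma(z)} \leq \left(z + \frac{\sqrt{3}}{2}\right)^{1/2} \leq 2\sqrt{z}$. -/

import Mathlib

/-!
Log-convexity of `Γ` on `(0, ∞)` gives `Γ(z + 1/2) ≤ Γ(z)^{1/2} Γ(z + 1)^{1/2} = Γ(z) √z`,
so `Γ(z + 1/2) / Γ(z) ≤ √z`, which is already below Kershaw's bound `(z + √3/2)^{1/2}`.
The second inequality is `z + √3/2 ≤ 4z`, i.e. `√3/2 ≤ 3z`.
-/

open Real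

theorem Real.Gamma_add_half_le_Gamma_mul_sqrt {s : ℝ} (hs : 0 < s) :
    Gamma (s + 1 / 2) ≤ Gamma s * √s := by
  have hconv := Gamma_mul_add_mul_le_rpow_Gamma_mul_rpow_Gamma hs (by linarith : 0 < s + 1)
    (by norm_num : (0 : ℝ) < 1 / 2) (by norm_num : (0 : ℝ) < 1 / 2) (by norm_num)
  have hG := Gamma_pos_of_pos hs
  calc Gamma (s + 1 / 2) = Gamma (1 / 2 * s + 1 / 2 * (s + 1)) := by ring_nf
    _ ≤ Gamma s ^ (1 / 2 : ℝ) * Gamma (s + 1) ^ (1 / 2 : ℝ) := hconv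
    _ = √(Gamma s) * √(Gamma s * s) := by
      rw [Gamma_add_one hs.ne', mul_comm s, ← sqrt_eq_rpow, ← sqrt_eq_rpow]
    _ = Gamma s * √s := by rw [sqrt_mul hG.le, ← mul_assoc, mul_self_sqrt hG.le]

theorem Real.Gamma_add_half_div_Gamma_le_sqrt {s : ℝ} (hs : 0 < s) :
    Gamma (s + 1 / 2) / Gamma s ≤ √s := by
  rw [div_le_iff₀ (Gamma_pos_of_pos hs), mul_comm]
  exact Gamma_add_half_le_Gamma_mul_sqrt hs

theorem Real.sqrt_add_le_two_mul_sqrt {x c : ℝ} (hc : c ≤ 3 * x) : √(x + c) ≤ 2 * √x := by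
  have h4 : 2 * √x = √(4 * x) := by
    rw [sqrt_mul (by norm_num), show (4 : ℝ) = 2 ^ 2 by norm_num, sqrt_sq (by norm_num)]
  rw [h4]
  exact sqrt_le_sqrt (by linarith)

/-- Kershaw's inequality: for every real `z > 1/2`,
`Γ(z + 1/2) / Γ(z) ≤ (z + √3/2)^{1/2} ≤ 2√z`. -/
theorem stmt7 (z : ℝ) (hz : 1 / 2 < z) :
    Real.Gamma (z + 1 / 2) / Real.Gamma z ≤ (z + Real.sqrt 3 / 2) ^ ((1 : ℝ) / 2) ∧
      (z + Real.sqrt 3 / 2) ^ ((1 : ℝ) / 2) ≤ 2 * Real.sqrt z := by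
  have hsqrt3 : √3 / 2 ≤ 3 * z := by
    nlinarith [sq_sqrt (by norm_num : (0 : ℝ) ≤ 3), sqrt_nonneg 3]
  rw [← sqrt_eq_rpow]
  exact ⟨(Gamma_add_half_div_Gamma_le_sqrt (by linarith)).trans
      (sqrt_le_sqrt (by linarith [sqrt_nonneg 3])),
    sqrt_add_le_two_mul_sqrt hsqrt3⟩
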